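/- Let (b_j) be a sequence in a Banach space and (e_j) its difference sequence. Then (b_j) is strongly summing if and only if (e_j) is a (c.c.)-sequence. -/

import Mathlib

open Filter Finset

section Defs

variable {X : Type*} [NormedAddCommGroup X] [NormedSpace ℝ X]

/-- A sequence is weak-Cauchy if `f (b n)` converges for every continuous functional `f`. -/
def WeakCauchy (b : ℕ → X) : Prop :=
  ∀ f : X →L[ℝ] ℝ, ∃ L : ℝ, Tendsto (fun n => f (b n)) atTop (nhds L)

/-- Weak convergence of a sequence to a point. -/
def WeakConvTo (b : ℕ → X) (x : X) : Prop :=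
  ∀ f : X →L[ℝ] ℝ, Tendsto (fun n => f (b n)) atTop (nhds (f x))

/-- A non-trivial weak-Cauchy sequence: weak-Cauchy but not weakly convergent. -/
def NontrivialWeakCauchy (b : ℕ → X) : Prop :=
  WeakCauchy b ∧ ¬ ∃ x : X, WeakConvTo b x

/-- `b` is a basic sequence with basis constant at most `C`:
the basis projections on the linear span have norm at most `C`. -/
def IsBasicWithConst (C : ℝ) (b : ℕ → X) : Prop :=
  1 ≤ C ∧ (∀ j, b j ≠ 0) ∧
    ∀ (c : ℕ → ℝ) (m n : ℕ), m ≤ n →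
      ‖∑ j ∈ Finset.range m, c j • b j‖ ≤ C * ‖∑ j ∈ Finset.range n, c j • b j‖

/-- A basic sequence. -/
def IsBasic (b : ℕ → X) : Prop := ∃ C : ℝ, IsBasicWithConst C b

/-- The partial sums `∑_{j<n} c j • b j` are norm-bounded. -/
def BoundedPartialSums (c : ℕ → ℝ) (b : ℕ → X) : Prop :=
  ∃ M : ℝ, ∀ n, ‖∑ j ∈ Finset.range n, c j • b j‖ ≤ M

/-- A strongly summing (s.s.) sequence: weak-Cauchy basic, and whenever the
partial sums `∑ c j • b j` are bounded, `∑ c j` converges. -/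
def StronglySumming (b : ℕ → X) : Prop :=
  WeakCauchy b ∧ IsBasic b ∧
    ∀ c : ℕ → ℝ, BoundedPartialSums c b →
      ∃ L : ℝ, Tendsto (fun n => ∑ j ∈ Finset.range n, c j) atTop (nhds L)

/-- `b` dominates the summing basis. -/
def DominatesSummingBasis (b : ℕ → X) : Prop :=
  ∃ β : ℝ, ∀ (c : ℕ → ℝ) (n : ℕ),
    |∑ j ∈ Finset.range n, c j| ≤ β * ‖∑ j ∈ Finset.range n, c j • b j‖

/-- An (s)-sequence: a weak-Cauchy basic sequence dominating the summing basis. -/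
def IsSSeq (b : ℕ → X) : Prop := WeakCauchy b ∧ IsBasic b ∧ DominatesSummingBasis b

/-- Semi-normalized sequence. -/
def SemiNormalized (b : ℕ → X) : Prop :=
  ∃ a A : ℝ, 0 < a ∧ ∀ j, a ≤ ‖b j‖ ∧ ‖b j‖ ≤ A

/-- The sequence of partial sums. -/
def partialSums (e : ℕ → X) : ℕ → X := fun n => ∑ j ∈ Finset.range n, e j

/-- A (c)-sequence: a semi-normalized basic sequence whose partial sums are weak-Cauchy. -/
def IsCSeq (e : ℕ → X) : Prop := SemiNormalized e ∧ IsBasic e ∧ WeakCauchy (partialSums e)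

/-- A (c.c.)-sequence: a basic sequence with weak-Cauchy partial sums such that
boundedness of `∑ c j • e j` forces the scalar sequence `c` to converge. -/
def IsCC (e : ℕ → X) : Prop :=
  IsBasic e ∧ WeakCauchy (partialSums e) ∧
    ∀ c : ℕ → ℝ, BoundedPartialSums c e → ∃ L : ℝ, Tendsto c atTop (nhds L)

/-- The difference sequence `e 0 = b 0`, `e j = b j - b (j-1)`. -/
def diffSeq (b : ℕ → X) : ℕ → X := fun j => if j = 0 then b 0 else b j - b (j - 1)

/-- `y` is a convex block basis of `x`. -/
def ConvexBlockBasis (y x : ℕ → X) : Prop :=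
  ∃ (n : ℕ → ℕ) (l : ℕ → ℝ), StrictMono n ∧ (∀ i, 0 ≤ l i) ∧
    ∀ j, (∑ i ∈ Finset.Ioc (n j) (n (j + 1)), l i) = 1 ∧
      y j = ∑ i ∈ Finset.Ioc (n j) (n (j + 1)), l i • x i

/-- The norm, in the space `Se` of convergent series, of the finitely supported
sequence `(c 0, …, c n, 0, …)`: the sup of absolute values of its partial sums. -/
noncomputable def sbNorm (c : ℕ → ℝ) (n : ℕ) : ℝ :=
  (Finset.range (n + 2)).sup' ⟨0, Finset.mem_range.mpr (Nat.succ_pos _)⟩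
    (fun m => |∑ j ∈ Finset.range m, c j|)

/-- `b` is equivalent to the summing basis (the unit vector basis of `Se ≅ c₀`). -/
def EquivSummingBasis (b : ℕ → X) : Prop :=
  ∃ A B : ℝ, 0 < A ∧ ∀ (c : ℕ → ℝ) (n : ℕ),
    A * sbNorm c n ≤ ‖∑ j ∈ Finset.range (n + 1), c j • b j‖ ∧
    ‖∑ j ∈ Finset.range (n + 1), c j • b j‖ ≤ B * sbNorm c n

/-- Weakly unconditionally Cauchy sequence. -/
def WUC (x : ℕ → X) : Prop := ∀ f : X →L[ℝ] ℝ, Summable (fun j => |f (x j)|)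

/-- DUC: the difference sequence is WUC. -/
def DUC (b : ℕ → X) : Prop := WUC (diffSeq b)

/-- The WUC "norm" `sup { ∑ |f (x j)| : ‖f‖ ≤ 1 }`. -/
noncomputable def wucNorm (x : ℕ → X) : ℝ :=
  sSup {r : ℝ | ∃ f : X →L[ℝ] ℝ, ‖f‖ ≤ 1 ∧ HasSum (fun j => |f (x j)|) r}

/-- The DUC "norm" of a sequence. -/
noncomputable def ducNorm (b : ℕ → X) : ℝ := wucNorm (diffSeq b)

/-- A boundedly complete sequence. -/
def BoundedlyComplete (b : ℕ → X) : Prop :=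
  ∀ c : ℕ → ℝ, BoundedPartialSums c b →
    ∃ x : X, Tendsto (fun n => ∑ j ∈ Finset.range n, c j • b j) atTop (nhds x)

/-- A skipped boundedly complete sequence. -/
def SkippedBoundedlyComplete (e : ℕ → X) : Prop :=
  ∀ c : ℕ → ℝ, (∀ N, ∃ j ≥ N, c j = 0) → BoundedPartialSums c e →
    ∃ x : X, Tendsto (fun n => ∑ j ∈ Finset.range n, c j • e j) atTop (nhds x)

/-- An ε-(c.c.) sequence. -/
def IsEpsCC (ε : ℝ) (e : ℕ → X) : Prop :=
  IsCSeq e ∧ ∀ c : ℕ → ℝ, (∀ N, ∃ j ≥ N, c j = 0) →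
    (∀ n, ‖∑ j ∈ Finset.range n, c j • e j‖ ≤ 1) →
    Filter.limsup (fun j => |c j|) atTop < ε

end Defs

set_option linter.unusedSectionVars false

section Proof

variable {X : Type*} [NormedAddCommGroup X] [NormedSpace ℝ X]

lemma psum_diff (b : ℕ → X) (n : ℕ) : partialSums (diffSeq b) (n + 1) = b n := by
  induction n with
  | zero => simp [partialSums, diffSeq]
  | succ n ih =>
    rw [partialSums, Finset.sum_range_succ, ← partialSums, ih]
    simp [diffSeq]

lemma sum_e_eq (b : ℕ → X) (c : ℕ → ℝ) (n : ℕ) :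
    ∑ j ∈ range (n + 1), c j • diffSeq b j
      = (∑ j ∈ range n, (c j - c (j + 1)) • b j) + c n • b n := by
  induction n with
  | zero => simp [diffSeq]
  | succ n ih =>
    have hd : diffSeq b (n + 1) = b (n + 1) - b n := by simp [diffSeq]
    rw [Finset.sum_range_succ, ih, Finset.sum_range_succ, hd, smul_sub, sub_smul]
    abel

lemma sum_b_eq (b : ℕ → X) (c : ℕ → ℝ) (n : ℕ) :
    ∑ j ∈ range n, c j • b j
      = ∑ i ∈ range n, (∑ j ∈ Finset.Ico i n, c j) • diffSeq b i := by
  induction n with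
  | zero => simp
  | succ n ih =>
    rw [Finset.sum_range_succ, ih]
    have h1 : ∀ i ∈ range (n + 1), (∑ j ∈ Finset.Ico i (n + 1), c j) • diffSeq b i
        = (∑ j ∈ Finset.Ico i n, c j) • diffSeq b i + c n • diffSeq b i := by
      intro i hi
      rw [Finset.mem_range, Nat.lt_succ_iff] at hi
      rw [Finset.sum_Ico_succ_top hi, add_smul]
    rw [Finset.sum_congr rfl h1, Finset.sum_add_distrib, Finset.sum_range_succ _ n,
      Finset.Ico_self, Finset.sum_empty, zero_smul, add_zero, ← Finset.smul_sum]
    have h2 : ∑ i ∈ range (n + 1), diffSeq b i = b n := psum_diff b n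
    rw [h2]

lemma coeff_bound {C : ℝ} {x : ℕ → X} (h : IsBasicWithConst C x) (c : ℕ → ℝ) {n j : ℕ}
    (hj : j < n) : |c j| * ‖x j‖ ≤ 2 * C * ‖∑ i ∈ range n, c i • x i‖ := by
  have h1 := h.2.2 c (j + 1) n hj
  have h2 := h.2.2 c j n (le_of_lt hj)
  have h3 : c j • x j = (∑ i ∈ range (j+1), c i • x i) - ∑ i ∈ range j, c i • x i := by
    rw [Finset.sum_range_succ]; abel
  have h4 : |c j| * ‖x j‖ = ‖c j • x j‖ := by
    rw [norm_smul, Real.norm_eq_abs]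
  rw [h4, h3]
  calc ‖(∑ i ∈ range (j+1), c i • x i) - ∑ i ∈ range j, c i • x i‖
      ≤ ‖∑ i ∈ range (j+1), c i • x i‖ + ‖∑ i ∈ range j, c i • x i‖ := norm_sub_le _ _
    _ ≤ C * ‖∑ i ∈ range n, c i • x i‖ + C * ‖∑ i ∈ range n, c i • x i‖ := add_le_add h1 h2
    _ = 2 * C * ‖∑ i ∈ range n, c i • x i‖ := by ring

lemma weakCauchy_bounded {b : ℕ → X} (h : WeakCauchy b) : ∃ B, 0 ≤ B ∧ ∀ n, ‖b n‖ ≤ B := by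
  have key : ∃ B, ∀ n, ‖(NormedSpace.inclusionInDoubleDualLi ℝ (E := X)) (b n)‖ ≤ B := by
    apply banach_steinhaus (g := fun n => (NormedSpace.inclusionInDoubleDualLi ℝ (E := X)) (b n))
    intro f
    obtain ⟨L, hL⟩ := h f
    have : BddAbove (Set.range fun n => ‖f (b n)‖) := by
      exact (hL.norm).bddAbove_range
    obtain ⟨M, hM⟩ := this
    refine ⟨M, fun n => ?_⟩
    exact hM ⟨n, rfl⟩
  obtain ⟨B, hB⟩ := key
  refine ⟨B, le_trans (ContinuousLinearMap.opNorm_nonneg _) (hB 0), fun n => ?_⟩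
  have := hB n
  rwa [(NormedSpace.inclusionInDoubleDualLi ℝ (E := X)).norm_map] at this

end Proof

section Proof2

variable {X : Type*} [NormedAddCommGroup X] [NormedSpace ℝ X]

lemma coeff_bound_e {b : ℕ → X} {C β : ℝ} (hC : IsBasicWithConst C b) (hβ0 : 0 ≤ β)
    (hβ : ∀ (c : ℕ → ℝ) (n : ℕ),
      |∑ j ∈ range n, c j| ≤ β * ‖∑ j ∈ range n, c j • b j‖)
    (c : ℕ → ℝ) {m n : ℕ} (hmn : m < n) :
    |c m| ≤ β * (1 + C) * ‖∑ j ∈ range n, c j • diffSeq b j‖ := by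
  obtain ⟨n, rfl⟩ : ∃ n', n = n' + 1 := ⟨n - 1, by omega⟩
  set a : ℕ → ℝ := fun j => if j + 1 < n + 1 then c j - c (j + 1) else c j with ha
  have hpart : ∀ k, k ≤ n → ∑ j ∈ range k, a j = c 0 - c k := by
    intro k hk
    have : ∀ j ∈ range k, a j = c j - c (j + 1) := by
      intro j hj
      rw [Finset.mem_range] at hj
      simp only [ha, if_pos (by omega : j + 1 < n + 1)]
    rw [Finset.sum_congr rfl this, Finset.sum_range_sub' c k]
  have hfull : ∑ j ∈ range (n + 1), a j = c 0 := by
    rw [Finset.sum_range_succ, hpart n le_rfl]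
    simp [ha]
  have hvec : ∑ j ∈ range (n + 1), a j • b j = ∑ j ∈ range (n + 1), c j • diffSeq b j := by
    rw [sum_e_eq, Finset.sum_range_succ]
    congr 1
    · apply Finset.sum_congr rfl
      intro j hj
      rw [Finset.mem_range] at hj
      simp only [ha, if_pos (by omega : j + 1 < n + 1)]
    · simp [ha]
  have h1 : |c 0| ≤ β * ‖∑ j ∈ range (n + 1), c j • diffSeq b j‖ := by
    rw [← hfull, ← hvec]; exact hβ a (n + 1)
  have h2 : |c 0 - c m| ≤ β * (C * ‖∑ j ∈ range (n + 1), c j • diffSeq b j‖) := by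
    rw [← hpart m (by omega)]
    calc |∑ j ∈ range m, a j| ≤ β * ‖∑ j ∈ range m, a j • b j‖ := hβ a m
      _ ≤ β * (C * ‖∑ j ∈ range (n + 1), a j • b j‖) := by
          apply mul_le_mul_of_nonneg_left (hC.2.2 a m (n + 1) (by omega)) hβ0
      _ = β * (C * ‖∑ j ∈ range (n + 1), c j • diffSeq b j‖) := by rw [hvec]
  calc |c m| = |c 0 - (c 0 - c m)| := by ring_nf
    _ ≤ |c 0| + |c 0 - c m| := abs_sub _ _
    _ ≤ β * ‖∑ j ∈ range (n+1), c j • diffSeq b j‖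
        + β * (C * ‖∑ j ∈ range (n+1), c j • diffSeq b j‖) := add_le_add h1 h2
    _ = β * (1 + C) * ‖∑ j ∈ range (n+1), c j • diffSeq b j‖ := by ring

lemma e_lower {e : ℕ → X} (hne : ∀ j, e j ≠ 0)
    (hconv : ∀ c : ℕ → ℝ, BoundedPartialSums c e → ∃ L, Tendsto c atTop (nhds L)) :
    ∃ a > 0, ∀ j, a ≤ ‖e j‖ := by
  by_contra hcon
  push_neg at hcon
  have key : ∀ (N : ℕ) (a : ℝ), 0 < a → ∃ i, N < i ∧ ‖e i‖ < a := by
    intro N a ha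
    have hne' : (range (N + 1)).Nonempty := ⟨0, Finset.mem_range.mpr (Nat.succ_pos _)⟩
    have hmin : 0 < min a ((range (N + 1)).inf' hne' fun i => ‖e i‖) := by
      apply lt_min ha
      rw [Finset.lt_inf'_iff]
      intro i _
      exact norm_pos_iff.mpr (hne i)
    obtain ⟨i, hi⟩ := hcon _ hmin
    refine ⟨i, ?_, lt_of_lt_of_le hi (min_le_left _ _)⟩
    by_contra hiN
    push_neg at hiN
    have h1 : (range (N + 1)).inf' hne' (fun i => ‖e i‖) ≤ ‖e i‖ :=
      Finset.inf'_le _ (Finset.mem_range.mpr (by omega))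
    have h2 := lt_of_lt_of_le hi (min_le_right _ _)
    linarith
  choose F hF1 hF2 using key
  set g : ℕ → ℕ := fun k =>
    Nat.rec (F 0 1 one_pos) (fun k ih => F ih ((1/2 : ℝ)^(k+1)) (by positivity)) k with hg
  have hmono : ∀ k, g k < g (k + 1) := fun k => hF1 _ _ _
  have hsmall : ∀ k, ‖e (g k)‖ < (1/2 : ℝ)^k := by
    intro k
    cases k with
    | zero => rw [pow_zero]; exact hF2 0 1 one_pos
    | succ k => exact hF2 _ _ _
  have hstrict : StrictMono g := strictMono_nat_of_lt_succ hmono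
  have hinj : Function.Injective g := hstrict.injective
  classical
  set c : ℕ → ℝ := fun j => if h : ∃ k, g k = j then (-1 : ℝ)^(h.choose) else 0 with hc
  have hcg : ∀ k, c (g k) = (-1 : ℝ)^k := by
    intro k
    have hex : ∃ k', g k' = g k := ⟨k, rfl⟩
    simp only [hc, dif_pos hex]
    congr 1
    exact hinj hex.choose_spec
  have hterm : ∀ j, ‖c j • e j‖ = if ∃ k, g k = j then ‖e j‖ else 0 := by
    intro j
    by_cases hj : ∃ k, g k = j
    · simp only [hc, dif_pos hj, norm_smul, abs_pow, Real.norm_eq_abs, abs_neg, abs_one,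
        one_pow, one_mul]
      simp [hj]
    · simp only [hc, dif_neg hj, zero_smul, norm_zero]
      simp [hj]
  have hbdd : BoundedPartialSums c e := by
    classical
    refine ⟨2, fun n => ?_⟩
    calc ‖∑ j ∈ range n, c j • e j‖ ≤ ∑ j ∈ range n, ‖c j • e j‖ := norm_sum_le _ _
      _ = ∑ j ∈ range n, (if ∃ k, g k = j then ‖e j‖ else 0) := by
          exact Finset.sum_congr rfl fun j _ => hterm j
      _ = ∑ j ∈ (range n).filter (fun j => ∃ k, g k = j), ‖e j‖ := (Finset.sum_filter _ _).symm
      _ = ∑ k ∈ (range n).filter (fun k => g k < n), ‖e (g k)‖ := by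
          apply Finset.sum_nbij' (fun j => if h : ∃ k, g k = j then h.choose else 0)
            (fun k => g k)
          · intro j hj
            simp only [Finset.mem_filter, Finset.mem_range] at hj ⊢
            obtain ⟨hjn, hex⟩ := hj
            rw [dif_pos hex]
            have := hex.choose_spec
            constructor
            · have := hstrict.le_apply (x := hex.choose)
              omega
            · omega
          · intro k hk
            simp only [Finset.mem_filter, Finset.mem_range] at hk ⊢
            exact ⟨hk.2, ⟨k, rfl⟩⟩
          · intro j hj
            simp only [Finset.mem_filter] at hj
            rw [dif_pos hj.2]
            exact hj.2.choose_spec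
          · intro k hk
            have hex : ∃ k', g k' = g k := ⟨k, rfl⟩
            rw [dif_pos hex]
            exact hinj hex.choose_spec
          · intro j hj
            simp only [Finset.mem_filter] at hj
            rw [dif_pos hj.2, hj.2.choose_spec]
      _ ≤ ∑ k ∈ (range n).filter (fun k => g k < n), (1/2 : ℝ)^k := by
          exact Finset.sum_le_sum fun k _ => (hsmall k).le
      _ ≤ ∑ k ∈ range n, (1/2 : ℝ)^k := by
          apply Finset.sum_le_sum_of_subset_of_nonneg (Finset.filter_subset _ _)
          intro k _ _; positivity
      _ ≤ 2 := sum_geometric_two_le n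
  obtain ⟨L, hL⟩ := hconv c hbdd
  have hgL : Tendsto (fun k => c (g k)) atTop (nhds L) := hL.comp hstrict.tendsto_atTop
  have hgL' : Tendsto (fun k => ((-1 : ℝ))^k) atTop (nhds L) := by
    rwa [funext hcg] at hgL
  have heven : L = 1 := by
    have h2 : Tendsto (fun k : ℕ => 2 * k) atTop atTop :=
      (strictMono_nat_of_lt_succ (fun n => by omega)).tendsto_atTop
    have := hgL'.comp h2
    have heq : (fun k : ℕ => ((-1 : ℝ))^(2 * k)) = fun _ => (1 : ℝ) := by
      funext k; rw [pow_mul]; norm_num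
    rw [show ((fun k => ((-1:ℝ))^k) ∘ fun k : ℕ => 2 * k) = fun k : ℕ => ((-1:ℝ))^(2*k) from rfl,
      heq] at this
    exact (tendsto_nhds_unique tendsto_const_nhds this).symm
  have hodd : L = -1 := by
    have h2 : Tendsto (fun k : ℕ => 2 * k + 1) atTop atTop :=
      (strictMono_nat_of_lt_succ (fun n => by omega)).tendsto_atTop
    have := hgL'.comp h2
    have heq : (fun k : ℕ => ((-1 : ℝ))^(2 * k + 1)) = fun _ => (-1 : ℝ) := by
      funext k; rw [pow_succ, pow_mul]; norm_num
    rw [show ((fun k => ((-1:ℝ))^k) ∘ fun k : ℕ => 2 * k + 1) = fun k : ℕ => ((-1:ℝ))^(2*k+1) from rfl,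
      heq] at this
    exact (tendsto_nhds_unique tendsto_const_nhds this).symm
  rw [heven] at hodd
  norm_num at hodd

end Proof2

section Proof3

variable {X : Type*} [NormedAddCommGroup X] [NormedSpace ℝ X]

lemma dominates {b : ℕ → X} {C : ℝ} (hC : IsBasicWithConst C b)
    (hss : ∀ c : ℕ → ℝ, BoundedPartialSums c b →
      ∃ L, Tendsto (fun n => ∑ j ∈ range n, c j) atTop (nhds L)) :
    ∃ β, 0 ≤ β ∧ ∀ (c : ℕ → ℝ) (n : ℕ),
      |∑ j ∈ range n, c j| ≤ β * ‖∑ j ∈ range n, c j • b j‖ := by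
  classical
  have hC1 : (1:ℝ) ≤ C := hC.1
  by_contra hcon
  push_neg at hcon
  have hcon' : ∀ β : ℝ, 0 < β → ∃ (c : ℕ → ℝ) (n : ℕ),
      β * ‖∑ j ∈ range n, c j • b j‖ < |∑ j ∈ range n, c j| := by
    intro β hβ
    exact hcon β hβ.le
  -- Step 1: tail-supported normalized small vectors
  have step1 : ∀ (N k : ℕ), ∃ (c : ℕ → ℝ) (n : ℕ), N < n ∧ (∀ j, j < N → c j = 0) ∧
      (∀ j, n ≤ j → c j = 0) ∧ (∑ j ∈ range n, c j) = 1 ∧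
      ‖∑ j ∈ range n, c j • b j‖ ≤ (1/2 : ℝ)^k := by
    intro N k
    set K : ℝ := ∑ j ∈ range N, 2 * C / ‖b j‖ with hK
    have hK0 : 0 ≤ K := Finset.sum_nonneg fun j _ => by positivity
    set ε : ℝ := (1/2 : ℝ)^k with hε
    have hε0 : 0 < ε := by positivity
    set δ : ℝ := min (1/(2*(K+1))) (ε/(2*(1+C))) with hδ
    have hδ0 : 0 < δ := lt_min (by positivity) (by positivity)
    obtain ⟨c₀, n, hlt⟩ := hcon' (1/δ) (by positivity)
    set σ : ℝ := ∑ j ∈ range n, c₀ j with hσ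
    have hσ0 : 0 < |σ| :=
      lt_of_le_of_lt (by positivity) hlt
    have hσne : σ ≠ 0 := fun h => by rw [h] at hσ0; simp at hσ0
    have hVσ : ‖∑ j ∈ range n, c₀ j • b j‖ < δ * |σ| := by
      have h1 : (1/δ) * ‖∑ j ∈ range n, c₀ j • b j‖ < |σ| := hlt
      calc ‖∑ j ∈ range n, c₀ j • b j‖
          = δ * ((1/δ) * ‖∑ j ∈ range n, c₀ j • b j‖) := by field_simp
        _ < δ * |σ| := by exact mul_lt_mul_of_pos_left h1 hδ0
    set c1 : ℕ → ℝ := fun j => if j < n then c₀ j / σ else 0 with hc1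
    have hc1sum : ∑ j ∈ range n, c1 j = 1 := by
      have : ∀ j ∈ range n, c1 j = c₀ j / σ := fun j hj => by
        simp [hc1, Finset.mem_range.mp hj]
      rw [Finset.sum_congr rfl this, ← Finset.sum_div, ← hσ, div_self hσne]
    have hc1vec : ∑ j ∈ range n, c1 j • b j = (1/σ) • ∑ j ∈ range n, c₀ j • b j := by
      rw [Finset.smul_sum]
      apply Finset.sum_congr rfl
      intro j hj
      rw [smul_smul]
      have : c1 j = (1/σ) * c₀ j := by
        simp [hc1, Finset.mem_range.mp hj]; ring
      rw [this]
    have hV1 : ‖∑ j ∈ range n, c1 j • b j‖ < δ := by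
      rw [hc1vec, norm_smul, Real.norm_eq_abs, abs_div, abs_one]
      calc (1/|σ|) * ‖∑ j ∈ range n, c₀ j • b j‖
          < (1/|σ|) * (δ * |σ|) := by
            exact mul_lt_mul_of_pos_left hVσ (by positivity)
        _ = δ := by field_simp
    have habs : ∀ j, |c1 j| ≤ 2 * C * δ / ‖b j‖ := by
      intro j
      have hbj : (0:ℝ) < ‖b j‖ := norm_pos_iff.mpr (hC.2.1 j)
      by_cases hj : j < n
      · have h1 := coeff_bound hC c1 hj
        rw [le_div_iff₀ hbj]
        calc |c1 j| * ‖b j‖ ≤ 2 * C * ‖∑ i ∈ range n, c1 i • b i‖ := h1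
          _ ≤ 2 * C * δ := by
              apply mul_le_mul_of_nonneg_left hV1.le (by positivity)
      · simp only [hc1, if_neg hj, abs_zero]
        positivity
    have hσN : |∑ j ∈ range N, c1 j| ≤ δ * K := by
      calc |∑ j ∈ range N, c1 j| ≤ ∑ j ∈ range N, |c1 j| :=
            Finset.abs_sum_le_sum_abs _ _
        _ ≤ ∑ j ∈ range N, 2 * C * δ / ‖b j‖ := Finset.sum_le_sum fun j _ => habs j
        _ = δ * K := by
            rw [hK, Finset.mul_sum]
            apply Finset.sum_congr rfl
            intro j _
            field_simp
    have hσN2 : |∑ j ∈ range N, c1 j| ≤ 1/2 := by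
      have hd1 : δ * (2*(K+1)) ≤ 1 := by
        rw [← le_div_iff₀ (by positivity)]
        exact min_le_left _ _
      nlinarith [hσN, hδ0.le, hK0]
    set τ : ℝ := 1 - ∑ j ∈ range N, c1 j with hτ
    have hτ2 : 1/2 ≤ |τ| := by
      have h1 := abs_le.mp hσN2
      have h2 : 1/2 ≤ τ := by rw [hτ]; linarith [h1.2]
      linarith [le_abs_self τ]
    have hτne : τ ≠ 0 := fun h => by rw [h] at hτ2; simp at hτ2; linarith
    rcases le_or_gt n N with hnN | hNn
    · exfalso
      have heq : ∑ j ∈ range N, c1 j = ∑ j ∈ range n, c1 j := by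
        symm
        apply Finset.sum_subset (Finset.range_subset_range.mpr hnN)
        intro j _ hj
        rw [Finset.mem_range, not_lt] at hj
        simp [hc1, not_lt.mpr hj]
      rw [heq, hc1sum] at hσN2
      norm_num at hσN2
    · refine ⟨fun j => if j < N then 0 else c1 j / τ, n, hNn, ?_, ?_, ?_, ?_⟩
      · intro j hj; simp [hj]
      · intro j hj
        have hjN : ¬ j < N := by omega
        have hc10 : c1 j = 0 := if_neg (by omega : ¬ j < n)
        simp [hjN, hc10]
      · have hsplit : ∑ j ∈ range n, (if j < N then 0 else c1 j / τ)
            = ∑ j ∈ Finset.Ico N n, c1 j / τ := by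
          rw [Finset.range_eq_Ico, ← Finset.sum_Ico_consecutive _ (Nat.zero_le N) hNn.le]
          have h1 : ∑ j ∈ Finset.Ico 0 N, (if j < N then 0 else c1 j / τ) = 0 := by
            apply Finset.sum_eq_zero
            intro j hj
            simp [(Finset.mem_Ico.mp hj).2]
          have h2 : ∑ j ∈ Finset.Ico N n, (if j < N then 0 else c1 j / τ)
              = ∑ j ∈ Finset.Ico N n, c1 j / τ := by
            apply Finset.sum_congr rfl
            intro j hj
            simp [not_lt.mpr (Finset.mem_Ico.mp hj).1]
          rw [h1, h2, zero_add]
        rw [hsplit, ← Finset.sum_div, Finset.sum_Ico_eq_sub _ hNn.le, hc1sum, ← hτ,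
          div_self hτne]
      · have hsplit : ∑ j ∈ range n, (if j < N then 0 else c1 j / τ) • b j
            = (1/τ) • ((∑ j ∈ range n, c1 j • b j) - ∑ j ∈ range N, c1 j • b j) := by
          rw [Finset.range_eq_Ico, ← Finset.sum_Ico_consecutive _ (Nat.zero_le N) hNn.le]
          have h1 : ∑ j ∈ Finset.Ico 0 N, (if j < N then 0 else c1 j / τ) • b j = 0 := by
            apply Finset.sum_eq_zero
            intro j hj
            simp [(Finset.mem_Ico.mp hj).2]
          have h2 : ∑ j ∈ Finset.Ico N n, (if j < N then 0 else c1 j / τ) • b j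
              = (1/τ) • ∑ j ∈ Finset.Ico N n, c1 j • b j := by
            rw [Finset.smul_sum]
            apply Finset.sum_congr rfl
            intro j hj
            rw [if_neg (not_lt.mpr (Finset.mem_Ico.mp hj).1), smul_smul]
            congr 1
            field_simp
          rw [h1, h2, zero_add, Finset.sum_Ico_eq_sub _ hNn.le]
          simp only [Finset.range_eq_Ico]
        rw [hsplit, norm_smul, Real.norm_eq_abs, abs_div, abs_one]
        have hproj : ‖∑ j ∈ range N, c1 j • b j‖ ≤ C * δ := by
          calc ‖∑ j ∈ range N, c1 j • b j‖ ≤ C * ‖∑ j ∈ range n, c1 j • b j‖ :=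
                hC.2.2 c1 N n hNn.le
            _ ≤ C * δ := mul_le_mul_of_nonneg_left hV1.le (by positivity)
        have hnorm : ‖(∑ j ∈ range n, c1 j • b j) - ∑ j ∈ range N, c1 j • b j‖
            ≤ δ + C * δ := by
          calc ‖(∑ j ∈ range n, c1 j • b j) - ∑ j ∈ range N, c1 j • b j‖
              ≤ ‖∑ j ∈ range n, c1 j • b j‖ + ‖∑ j ∈ range N, c1 j • b j‖ := norm_sub_le _ _
            _ ≤ δ + C * δ := add_le_add hV1.le hproj
        calc 1/|τ| * ‖(∑ j ∈ range n, c1 j • b j) - ∑ j ∈ range N, c1 j • b j‖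
            ≤ 2 * (δ + C * δ) := by
              apply mul_le_mul (by rw [div_le_iff₀ (by linarith)]; linarith) hnorm
                (norm_nonneg _) (by norm_num)
          _ = 2 * (1 + C) * δ := by ring
          _ ≤ ε := by
              have : δ ≤ ε/(2*(1+C)) := min_le_right _ _
              rw [le_div_iff₀ (by positivity)] at this
              linarith
  -- Step 2: recursive block construction
  choose cF nF hn1 hz1 hz2 hsum1 hnorm1 using step1
  set NS : ℕ → ℕ := fun k => Nat.rec 0 (fun k ih => nF ih k) k with hNS
  have hNSsucc : ∀ k, NS (k+1) = nF (NS k) k := fun k => rfl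
  set cc : ℕ → ℕ → ℝ := fun k => cF (NS k) k with hcc
  have hmono : ∀ k, NS k < NS (k+1) := fun k => hn1 (NS k) k
  have hstrict : StrictMono NS := strictMono_nat_of_lt_succ hmono
  have hge : ∀ k, k ≤ NS k := fun k => hstrict.le_apply
  have hz1' : ∀ k j, j < NS k → cc k j = 0 := fun k j hj => hz1 (NS k) k j hj
  have hz2' : ∀ k j, NS (k+1) ≤ j → cc k j = 0 := fun k j hj => hz2 (NS k) k j hj
  have hsum' : ∀ k, ∑ j ∈ range (NS (k+1)), cc k j = 1 := fun k => hsum1 (NS k) k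
  have hnorm' : ∀ k, ‖∑ j ∈ range (NS (k+1)), cc k j • b j‖ ≤ (1/2 : ℝ)^k :=
    fun k => hnorm1 (NS k) k
  set c : ℕ → ℝ := fun j => ∑ k ∈ range (j+1), cc k j with hc
  have hcval : ∀ (M j : ℕ), j < M → c j = ∑ k ∈ range M, cc k j := by
    intro M j hj
    apply Finset.sum_subset (Finset.range_subset_range.mpr (by omega))
    intro k _ hk
    rw [Finset.mem_range, not_lt] at hk
    exact hz1' k j (lt_of_lt_of_le (Nat.lt_of_lt_of_le (Nat.lt_succ_self j) hk) (hge k))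
  have hswap : ∀ M, ∑ j ∈ range M, c j = ∑ k ∈ range M, ∑ j ∈ range M, cc k j := by
    intro M
    rw [Finset.sum_congr rfl (fun j hj => hcval M j (Finset.mem_range.mp hj)),
      Finset.sum_comm]
  have hswapv : ∀ M, ∑ j ∈ range M, c j • b j
      = ∑ k ∈ range M, ∑ j ∈ range M, cc k j • b j := by
    intro M
    have : ∀ j ∈ range M, c j • b j = ∑ k ∈ range M, cc k j • b j := by
      intro j hj
      rw [hcval M j (Finset.mem_range.mp hj), Finset.sum_smul]
    rw [Finset.sum_congr rfl this, Finset.sum_comm]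
  have hblockv : ∀ k M, ‖∑ j ∈ range M, cc k j • b j‖ ≤ C * (1/2 : ℝ)^k := by
    intro k M
    rcases le_or_gt M (NS (k+1)) with h | h
    · calc ‖∑ j ∈ range M, cc k j • b j‖
          ≤ C * ‖∑ j ∈ range (NS (k+1)), cc k j • b j‖ := hC.2.2 _ M _ h
        _ ≤ C * (1/2 : ℝ)^k := mul_le_mul_of_nonneg_left (hnorm' k) (by positivity)
    · have heq : ∑ j ∈ range M, cc k j • b j = ∑ j ∈ range (NS (k+1)), cc k j • b j := by
        symm
        apply Finset.sum_subset (Finset.range_subset_range.mpr h.le)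
        intro j _ hj
        rw [Finset.mem_range, not_lt] at hj
        rw [hz2' k j hj, zero_smul]
      rw [heq]
      calc ‖∑ j ∈ range (NS (k+1)), cc k j • b j‖ ≤ (1/2 : ℝ)^k := hnorm' k
        _ ≤ C * (1/2 : ℝ)^k := le_mul_of_one_le_left (by positivity) hC1
  have hbdd : BoundedPartialSums c b := by
    refine ⟨2 * C, fun M => ?_⟩
    rw [hswapv M]
    calc ‖∑ k ∈ range M, ∑ j ∈ range M, cc k j • b j‖
        ≤ ∑ k ∈ range M, ‖∑ j ∈ range M, cc k j • b j‖ := norm_sum_le _ _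
      _ ≤ ∑ k ∈ range M, C * (1/2 : ℝ)^k := Finset.sum_le_sum fun k _ => hblockv k M
      _ = C * ∑ k ∈ range M, (1/2 : ℝ)^k := by rw [Finset.mul_sum]
      _ ≤ C * 2 := mul_le_mul_of_nonneg_left (sum_geometric_two_le M) (by positivity)
      _ = 2 * C := by ring
  obtain ⟨L, hL⟩ := hss c hbdd
  have hblocksum : ∀ K : ℕ, ∑ j ∈ range (NS K), c j = (K : ℝ) := by
    intro K
    rw [hswap (NS K)]
    have hinner : ∀ k, k < K → ∑ j ∈ range (NS K), cc k j = 1 := by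
      intro k hk
      have hle : NS (k+1) ≤ NS K := hstrict.monotone (Nat.succ_le_of_lt hk)
      rw [← hsum' k]
      symm
      apply Finset.sum_subset (Finset.range_subset_range.mpr hle)
      intro j _ hj
      rw [Finset.mem_range, not_lt] at hj
      exact hz2' k j hj
    have houter : ∑ k ∈ range (NS K), ∑ j ∈ range (NS K), cc k j
        = ∑ k ∈ range K, ∑ j ∈ range (NS K), cc k j := by
      symm
      apply Finset.sum_subset (Finset.range_subset_range.mpr (hge K))
      intro k _ hk
      rw [Finset.mem_range, not_lt] at hk
      apply Finset.sum_eq_zero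
      intro j hj
      rw [Finset.mem_range] at hj
      exact hz1' k j (lt_of_lt_of_le hj (hstrict.monotone hk))
    rw [houter, Finset.sum_congr rfl (fun k hk => hinner k (Finset.mem_range.mp hk))]
    simp
  have hcomp : Tendsto (fun K => ∑ j ∈ range (NS K), c j) atTop (nhds L) :=
    hL.comp hstrict.tendsto_atTop
  rw [funext hblocksum] at hcomp
  exact not_tendsto_nhds_of_tendsto_atTop tendsto_natCast_atTop_atTop L hcomp

end Proof3


/-- a sequence is strongly summing iff its difference sequence is
(c.c.). -/
theorem stmt5 {X : Type*} [NormedAddCommGroup X] [NormedSpace ℝ X]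
    (b : ℕ → X) :
    StronglySumming b ↔ IsCC (diffSeq b) := by
  constructor
  · rintro ⟨hwc, ⟨C, hC⟩, hsum⟩
    obtain ⟨B, hB0, hB⟩ := weakCauchy_bounded hwc
    obtain ⟨β, hβ0, hβ⟩ := dominates hC hsum
    have hC1 : (1:ℝ) ≤ C := hC.1
    have hCp : (0:ℝ) < C := by linarith
    -- nonvanishing of the difference sequence
    have hne : ∀ j, diffSeq b j ≠ 0 := by
      intro j
      cases j with
      | zero => simpa [diffSeq] using hC.2.1 0
      | succ m =>
        have hd : diffSeq b (m+1) = b (m+1) - b m := by simp [diffSeq]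
        rw [hd, sub_ne_zero]
        intro heq
        set c : ℕ → ℝ := fun j => if j = m then 1 else if j = m + 1 then -1 else 0 with hc
        have h1 : ∑ j ∈ range (m+1), c j • b j = b m := by
          rw [Finset.sum_range_succ]
          have h0 : ∑ j ∈ range m, c j • b j = 0 := by
            apply Finset.sum_eq_zero
            intro j hj
            rw [Finset.mem_range] at hj
            have hcz : c j = 0 := by
              simp only [hc]
              rw [if_neg (by omega : ¬ j = m), if_neg (by omega : ¬ j = m + 1)]
            rw [hcz, zero_smul]
          rw [h0, zero_add]
          have hcm : c m = 1 := by simp [hc]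
          rw [hcm, one_smul]
        have h2 : ∑ j ∈ range (m+2), c j • b j = 0 := by
          rw [Finset.sum_range_succ, h1]
          have hcm1 : c (m+1) = -1 := by
            simp only [hc]
            norm_num
          rw [hcm1, heq]
          simp
        have h3 := hC.2.2 c (m+1) (m+2) (by omega)
        rw [h1, h2] at h3
        simp only [norm_zero, mul_zero] at h3
        exact hC.2.1 m (norm_le_zero_iff.mp h3)
    have hprod : (0:ℝ) ≤ β * (1 + C) * B :=
      mul_nonneg (mul_nonneg hβ0 (by linarith)) hB0
    refine ⟨⟨C + β * (1+C) * B, ⟨by linarith, hne, ?_⟩⟩, ?_, ?_⟩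
    · -- basis inequality for the difference sequence
      intro c m n hmn
      cases m with
      | zero =>
        simp only [Finset.range_zero, Finset.sum_empty, norm_zero]
        have h9 : (0:ℝ) ≤ C + β * (1+C) * B := by linarith
        positivity
      | succ m' =>
        obtain ⟨n', rfl⟩ : ∃ n'', n = n'' + 1 := ⟨n - 1, by omega⟩
        set a : ℕ → ℝ := fun j => if j + 1 < n' + 1 then c j - c (j + 1) else c j with ha
        have hvec : ∑ j ∈ range (n' + 1), a j • b j
            = ∑ j ∈ range (n' + 1), c j • diffSeq b j := by
          rw [sum_e_eq, Finset.sum_range_succ]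
          congr 1
          · apply Finset.sum_congr rfl
            intro j hj
            rw [Finset.mem_range] at hj
            simp only [ha, if_pos (by omega : j + 1 < n' + 1)]
          · simp [ha]
        have hpartial : ∑ j ∈ range (m' + 1), c j • diffSeq b j
            = (∑ j ∈ range m', a j • b j) + c m' • b m' := by
          rw [sum_e_eq b c m']
          congr 1
          apply Finset.sum_congr rfl
          intro j hj
          rw [Finset.mem_range] at hj
          simp only [ha, if_pos (by omega : j + 1 < n' + 1)]
        have hcm : |c m'| ≤ β * (1 + C) * ‖∑ j ∈ range (n' + 1), c j • diffSeq b j‖ :=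
          coeff_bound_e hC hβ0 hβ c (by omega)
        calc ‖∑ j ∈ range (m' + 1), c j • diffSeq b j‖
            = ‖(∑ j ∈ range m', a j • b j) + c m' • b m'‖ := by rw [hpartial]
          _ ≤ ‖∑ j ∈ range m', a j • b j‖ + ‖c m' • b m'‖ := norm_add_le _ _
          _ ≤ C * ‖∑ j ∈ range (n' + 1), a j • b j‖ + |c m'| * ‖b m'‖ := by
              rw [norm_smul, Real.norm_eq_abs]
              exact add_le_add_left (hC.2.2 a m' (n' + 1) (by omega)) _
          _ ≤ C * ‖∑ j ∈ range (n' + 1), c j • diffSeq b j‖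
              + (β * (1 + C) * ‖∑ j ∈ range (n' + 1), c j • diffSeq b j‖) * B := by
              rw [hvec]
              refine add_le_add_right ?_ _
              exact mul_le_mul hcm (hB m') (norm_nonneg _) (by positivity)
          _ = (C + β * (1 + C) * B) * ‖∑ j ∈ range (n' + 1), c j • diffSeq b j‖ := by ring
    · -- weak-Cauchy partial sums
      intro f
      obtain ⟨L, hL⟩ := hwc f
      refine ⟨L, ?_⟩
      have h1 : Tendsto (fun n : ℕ => f (b (n - 1))) atTop (nhds L) :=
        hL.comp (tendsto_sub_atTop_nat 1)
      apply Tendsto.congr' _ h1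
      filter_upwards [Filter.eventually_ge_atTop 1] with n hn
      obtain ⟨m, rfl⟩ : ∃ m, n = m + 1 := ⟨n - 1, by omega⟩
      rw [Nat.add_sub_cancel, psum_diff]
    · -- coefficient convergence
      rintro c ⟨M, hM⟩
      have hM0 : (0:ℝ) ≤ M := le_trans (norm_nonneg _) (hM 0)
      set a : ℕ → ℝ := fun j => c j - c (j + 1) with ha
      have hcb : ∀ m, |c m| ≤ β * (1 + C) * M := by
        intro m
        calc |c m| ≤ β * (1 + C) * ‖∑ j ∈ range (m+1), c j • diffSeq b j‖ :=
              coeff_bound_e hC hβ0 hβ c (by omega)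
          _ ≤ β * (1 + C) * M := by
              apply mul_le_mul_of_nonneg_left (hM (m+1))
                (mul_nonneg hβ0 (by linarith))
      have hab : ∀ m, ∑ j ∈ range m, a j • b j
          = (∑ j ∈ range (m+1), c j • diffSeq b j) - c m • b m := by
        intro m
        rw [sum_e_eq b c m]
        abel
      have hbdd : BoundedPartialSums a b := by
        refine ⟨M + β * (1 + C) * M * B, fun m => ?_⟩
        rw [hab]
        calc ‖(∑ j ∈ range (m+1), c j • diffSeq b j) - c m • b m‖
            ≤ ‖∑ j ∈ range (m+1), c j • diffSeq b j‖ + ‖c m • b m‖ := norm_sub_le _ _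
          _ ≤ M + β * (1 + C) * M * B := by
              refine add_le_add (hM (m+1)) ?_
              rw [norm_smul, Real.norm_eq_abs]
              exact mul_le_mul (hcb m) (hB m) (norm_nonneg _)
                (mul_nonneg (mul_nonneg hβ0 (by linarith)) hM0)
      obtain ⟨L', hL'⟩ := hsum a hbdd
      have heq : (fun n => ∑ j ∈ range n, a j) = fun n => c 0 - c n := by
        funext n
        exact Finset.sum_range_sub' c n
      rw [heq] at hL'
      refine ⟨c 0 - L', ?_⟩
      have := (tendsto_const_nhds (x := c 0) (f := atTop)).sub hL'
      simpa using this
  · rintro ⟨⟨C, hC⟩, hwcp, hconv⟩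
    obtain ⟨B, hB0, hB'⟩ := weakCauchy_bounded hwcp
    have hC1 : (1:ℝ) ≤ C := hC.1
    have hCp : (0:ℝ) < C := by linarith
    have hBb : ∀ n, ‖b n‖ ≤ B := fun n => by rw [← psum_diff b n]; exact hB' (n+1)
    obtain ⟨α, hα0, hα⟩ := e_lower hC.2.1 hconv
    have hbne : ∀ j, b j ≠ 0 := by
      intro j hbj
      have h1 : ∑ i ∈ range (j+1), diffSeq b i = 0 := by
        rw [show (∑ i ∈ range (j+1), diffSeq b i) = partialSums (diffSeq b) (j+1) from rfl,
          psum_diff, hbj]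
      have h2 := hC.2.2 (fun _ => (1:ℝ)) 1 (j+1) (by omega)
      simp only [one_smul] at h2
      rw [h1, Finset.sum_range_one] at h2
      simp only [norm_zero, mul_zero] at h2
      exact hC.2.1 0 (norm_le_zero_iff.mp h2)
    refine ⟨?_, ⟨C + 2 * C * B / α, ⟨?_, hbne, ?_⟩⟩, ?_⟩
    · -- weak-Cauchy
      intro f
      obtain ⟨L, hL⟩ := hwcp f
      refine ⟨L, ?_⟩
      have h1 := hL.comp (tendsto_add_atTop_nat 1)
      have heq : ((fun n => f (partialSums (diffSeq b) n)) ∘ fun n => n + 1)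
          = fun n => f (b n) := by
        funext n
        simp only [Function.comp_apply, psum_diff]
      rwa [heq] at h1
    · -- constant at least one
      have : (0:ℝ) ≤ 2 * C * B / α := by positivity
      linarith
    · -- basis inequality for b
      intro c m n hmn
      have hident : ∑ j ∈ range m, c j • b j
          = (∑ i ∈ range m, (∑ j ∈ Finset.Ico i n, c j) • diffSeq b i)
            - (∑ j ∈ Finset.Ico m n, c j) • partialSums (diffSeq b) m := by
        rw [sum_b_eq b c m]
        have hsp : ∀ i ∈ range m, (∑ j ∈ Finset.Ico i m, c j) • diffSeq b i
            = (∑ j ∈ Finset.Ico i n, c j) • diffSeq b i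
              - (∑ j ∈ Finset.Ico m n, c j) • diffSeq b i := by
          intro i hi
          rw [Finset.mem_range] at hi
          rw [← sub_smul]
          congr 1
          rw [← Finset.sum_Ico_consecutive c (le_of_lt hi) hmn]
          ring
        rw [Finset.sum_congr rfl hsp, Finset.sum_sub_distrib]
        congr 1
        rw [← Finset.smul_sum]
        rfl
      have ht : |∑ j ∈ Finset.Ico m n, c j| * α ≤ 2 * C * ‖∑ j ∈ range n, c j • b j‖ := by
        rcases eq_or_lt_of_le hmn with rfl | hlt
        · simp only [Finset.Ico_self, Finset.sum_empty, abs_zero, zero_mul]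
          positivity
        · have h1 := coeff_bound hC (fun i => ∑ j ∈ Finset.Ico i n, c j) hlt
          rw [← sum_b_eq b c n] at h1
          calc |∑ j ∈ Finset.Ico m n, c j| * α
              ≤ |∑ j ∈ Finset.Ico m n, c j| * ‖diffSeq b m‖ := by
                exact mul_le_mul_of_nonneg_left (hα m) (abs_nonneg _)
            _ ≤ 2 * C * ‖∑ j ∈ range n, c j • b j‖ := h1
      have ht' : |∑ j ∈ Finset.Ico m n, c j| ≤ 2 * C * ‖∑ j ∈ range n, c j • b j‖ / α := by
        rw [le_div_iff₀ hα0]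
        exact ht
      calc ‖∑ j ∈ range m, c j • b j‖
          = ‖(∑ i ∈ range m, (∑ j ∈ Finset.Ico i n, c j) • diffSeq b i)
              - (∑ j ∈ Finset.Ico m n, c j) • partialSums (diffSeq b) m‖ := by rw [hident]
        _ ≤ ‖∑ i ∈ range m, (∑ j ∈ Finset.Ico i n, c j) • diffSeq b i‖
            + |∑ j ∈ Finset.Ico m n, c j| * ‖partialSums (diffSeq b) m‖ := by
            refine le_trans (norm_sub_le _ _) ?_
            rw [norm_smul, Real.norm_eq_abs]
        _ ≤ C * ‖∑ i ∈ range n, (∑ j ∈ Finset.Ico i n, c j) • diffSeq b i‖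
            + (2 * C * ‖∑ j ∈ range n, c j • b j‖ / α) * B := by
            refine add_le_add (hC.2.2 _ m n hmn) ?_
            exact mul_le_mul ht' (hB' m) (norm_nonneg _) (by positivity)
        _ = (C + 2 * C * B / α) * ‖∑ j ∈ range n, c j • b j‖ := by
            rw [← sum_b_eq b c n]
            field_simp
    · -- the summing property
      rintro c ⟨M, hM⟩
      have hM0 : (0:ℝ) ≤ M := le_trans (norm_nonneg _) (hM 0)
      set σ : ℕ → ℝ := fun k => ∑ j ∈ range k, c j with hσ
      have hσb : ∀ n, |σ n| ≤ 2 * C * M / α := by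
        intro n
        cases n with
        | zero => simp [hσ]; positivity
        | succ n' =>
          have h1 := coeff_bound hC (fun i => ∑ j ∈ Finset.Ico i (n'+1), c j)
            (Nat.succ_pos n')
          beta_reduce at h1
          rw [← sum_b_eq b c (n'+1)] at h1
          have h2 : ∑ j ∈ Finset.Ico 0 (n'+1), c j = σ (n'+1) := by
            rw [hσ]; beta_reduce; rw [Finset.range_eq_Ico]
          rw [h2] at h1
          have h3 : |σ (n'+1)| * α ≤ 2 * C * M := by
            calc |σ (n'+1)| * α ≤ |σ (n'+1)| * ‖diffSeq b 0‖ :=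
                  mul_le_mul_of_nonneg_left (hα 0) (abs_nonneg _)
              _ ≤ 2 * C * ‖∑ j ∈ range (n'+1), c j • b j‖ := h1
              _ ≤ 2 * C * M := by
                  exact mul_le_mul_of_nonneg_left (hM (n'+1)) (by positivity)
          rw [le_div_iff₀ hα0]
          exact h3
      have hident : ∀ n, ∑ i ∈ range n, σ i • diffSeq b i
          = σ n • partialSums (diffSeq b) n - ∑ j ∈ range n, c j • b j := by
        intro n
        rw [sum_b_eq b c n]
        have hsp : ∀ i ∈ range n, (∑ j ∈ Finset.Ico i n, c j) • diffSeq b i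
            = σ n • diffSeq b i - σ i • diffSeq b i := by
          intro i hi
          rw [Finset.mem_range] at hi
          rw [← sub_smul]
          congr 1
          rw [Finset.sum_Ico_eq_sub c (le_of_lt hi)]
        rw [Finset.sum_congr rfl hsp, Finset.sum_sub_distrib, ← Finset.smul_sum]
        have : σ n • ∑ i ∈ range n, diffSeq b i = σ n • partialSums (diffSeq b) n := rfl
        rw [this]
        abel
      have hbdd : BoundedPartialSums σ (diffSeq b) := by
        refine ⟨(2 * C * M / α) * B + M, fun n => ?_⟩
        rw [hident n]
        calc ‖σ n • partialSums (diffSeq b) n - ∑ j ∈ range n, c j • b j‖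
            ≤ ‖σ n • partialSums (diffSeq b) n‖ + ‖∑ j ∈ range n, c j • b j‖ :=
              norm_sub_le _ _
          _ ≤ (2 * C * M / α) * B + M := by
              refine add_le_add ?_ (hM n)
              rw [norm_smul, Real.norm_eq_abs]
              exact mul_le_mul (hσb n) (hB' n) (norm_nonneg _) (by positivity)
      obtain ⟨L, hL⟩ := hconv σ hbdd
      exact ⟨L, hL⟩
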